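/- Under the hypotheses of the augmented triple complex lemma (exact rows in the δ₁-direction), the augmentation map f* : Tot(V) → Tot(K) is a quasi-isomorphism of total complexes. -/

import Mathlib

section

variable {K : ℕ → ℕ → ℕ → Type*} [∀ r p q, AddCommGroup (K r p q)]
variable {V : ℕ → ℕ → Type*} [∀ p q, AddCommGroup (V p q)]

/-- The `δ₁`-contribution `δ₁(c_{r−1,p,q})` to the total differential of the
triple complex. -/
def tot3A (δ₁ : ∀ r p q, K r p q →+ K (r + 1) p q) (c : ∀ r p q, K r p q) :
    ∀ r p q, K r p q
  | 0, _, _ => 0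
  | (r + 1), p, q => δ₁ r p q (c r p q)

/-- The `δ₂`-contribution `δ₂(c_{r,p−1,q})` to the total differential. -/
def tot3B (δ₂ : ∀ r p q, K r p q →+ K r (p + 1) q) (c : ∀ r p q, K r p q) :
    ∀ r p q, K r p q
  | _, 0, _ => 0
  | r, (p + 1), q => δ₂ r p q (c r p q)

/-- The `d`-contribution `d(c_{r,p,q−1})` to the total differential. -/
def tot3C (d : ∀ r p q, K r p q →+ K r p (q + 1)) (c : ∀ r p q, K r p q) :
    ∀ r p q, K r p q
  | _, _, 0 => 0
  | r, p, (q + 1) => d r p q (c r p q)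

/-- The total differential `D = δ₁ + (−1)^r δ₂ + (−1)^{r+p} d` of a first-octant
triple complex. -/
def totD3 (δ₁ : ∀ r p q, K r p q →+ K (r + 1) p q)
    (δ₂ : ∀ r p q, K r p q →+ K r (p + 1) q)
    (d : ∀ r p q, K r p q →+ K r p (q + 1))
    (c : ∀ r p q, K r p q) (r p q : ℕ) : K r p q :=
  tot3A δ₁ c r p q + ((-1 : ℤ) ^ r) • tot3B δ₂ c r p q
    + ((-1 : ℤ) ^ (r + p)) • tot3C d c r p q

/-- The horizontal (`δ₂`-direction) contribution to the total differential of the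
augmentation double complex `V^{p,q}`. -/
def tot2A (δ₂V : ∀ p q, V p q →+ V (p + 1) q) (ω : ∀ p q, V p q) :
    ∀ p q, V p q
  | 0, _ => 0
  | (p + 1), q => δ₂V p q (ω p q)

/-- The vertical (`d`-direction) contribution to the total differential of the
augmentation double complex. -/
def tot2B (dV : ∀ p q, V p q →+ V p (q + 1)) (ω : ∀ p q, V p q) :
    ∀ p q, V p q
  | _, 0 => 0
  | p, (q + 1) => dV p q (ω p q)

/-- The total differential `D̃ = δ₂ + (−1)^p d` of the augmentation double
complex. -/
def totD2 (δ₂V : ∀ p q, V p q →+ V (p + 1) q)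
    (dV : ∀ p q, V p q →+ V p (q + 1))
    (ω : ∀ p q, V p q) (p q : ℕ) : V p q :=
  tot2A δ₂V ω p q + ((-1 : ℤ) ^ p) • tot2B dV ω p q

/-- The extension of the augmentation `f* : V^{p,q} → K^{0,p,q}` to an embedding of
total complexes, placing `f*(ω)` in the `r = 0` layer. -/
def augEmb (f : ∀ p q, V p q →+ K 0 p q) (ω : ∀ p q, V p q) :
    ∀ r p q, K r p q
  | 0, p, q => f p q (ω p q)
  | (_ + 1), _, _ => 0

end

/-!
Exactness of the rows lets one push a total cocycle of `K` down to the layer `r = 0` one level at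
a time: the top nonzero layer `c_{m+1}` is `δ₁`-closed, so it equals `δ₁ y` and subtracting
`D y` removes it. What survives in the layer `r = 0` is `δ₁`-closed, hence comes from `V`, and
since `f*` is injective and commutes with the differentials it is a `D̃`-cocycle. The same
descent applied to a primitive `φ` of `f*(ω)` produces a primitive of `ω`.
-/

/-- Lifting `0` to `0` keeps every lift concentrated in the degree of what it lifts. -/
theorem AddMonoidHom.exists_apply_eq_and_eq_zero {A B : Type*} [AddZeroClass A] [AddZeroClass B]
    (g : A →+ B) {x : B} (hx : ∃ y, g y = x) : ∃ y, g y = x ∧ (x = 0 → y = 0) := by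
  by_cases h : x = 0
  · exact ⟨0, by rw [map_zero, h], fun _ => rfl⟩
  · obtain ⟨y, hy⟩ := hx
    exact ⟨y, hy, fun h' => absurd h' h⟩

section TotalDifferential

variable {K : ℕ → ℕ → ℕ → Type*} [∀ r p q, AddCommGroup (K r p q)]
variable (δ₁ : ∀ r p q, K r p q →+ K (r + 1) p q) (δ₂ : ∀ r p q, K r p q →+ K r (p + 1) q)
  (d : ∀ r p q, K r p q →+ K r p (q + 1))

theorem totD3_zero (r p q : ℕ) : totD3 δ₁ δ₂ d 0 r p q = 0 := by
  rcases r with _ | r <;> rcases p with _ | p <;> rcases q with _ | q <;>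
    simp [totD3, tot3A, tot3B, tot3C]

theorem totD3_add (a b : ∀ r p q, K r p q) (r p q : ℕ) :
    totD3 δ₁ δ₂ d (a + b) r p q = totD3 δ₁ δ₂ d a r p q + totD3 δ₁ δ₂ d b r p q := by
  rcases r with _ | r <;> rcases p with _ | p <;> rcases q with _ | q <;>
    simp [totD3, tot3A, tot3B, tot3C, smul_add] <;> abel

theorem totD3_sub (a b : ∀ r p q, K r p q) (r p q : ℕ) :
    totD3 δ₁ δ₂ d (a - b) r p q = totD3 δ₁ δ₂ d a r p q - totD3 δ₁ δ₂ d b r p q := by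
  rcases r with _ | r <;> rcases p with _ | p <;> rcases q with _ | q <;>
    simp [totD3, tot3A, tot3B, tot3C, smul_sub] <;> abel

theorem totD3_totD3
    (hδ₁ : ∀ r p q (x : K r p q), δ₁ (r + 1) p q (δ₁ r p q x) = 0)
    (hδ₂ : ∀ r p q (x : K r p q), δ₂ r (p + 1) q (δ₂ r p q x) = 0)
    (hd : ∀ r p q (x : K r p q), d r p (q + 1) (d r p q x) = 0)
    (hc12 : ∀ r p q (x : K r p q), δ₁ r (p + 1) q (δ₂ r p q x) = δ₂ (r + 1) p q (δ₁ r p q x))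
    (hc1d : ∀ r p q (x : K r p q), δ₁ r p (q + 1) (d r p q x) = d (r + 1) p q (δ₁ r p q x))
    (hc2d : ∀ r p q (x : K r p q), δ₂ r p (q + 1) (d r p q x) = d r (p + 1) q (δ₂ r p q x))
    (c : ∀ r p q, K r p q) (r p q : ℕ) :
    totD3 δ₁ δ₂ d (totD3 δ₁ δ₂ d c) r p q = 0 := by
  rcases r with _ | _ | r <;> rcases p with _ | _ | p <;> rcases q with _ | _ | q <;>
    simp only [totD3, tot3A, tot3B, tot3C, map_add, map_zsmul, map_zero,
      hδ₁, hδ₂, hd, hc12, hc1d, hc2d, smul_zero, add_zero, zero_add, smul_add, smul_smul] <;>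
    module

theorem totD3_eq_zero_of_support {N : ℕ} {b : ∀ r p q, K r p q}
    (hb : ∀ r p q, r + p + q + 1 ≠ N → b r p q = 0) {r p q : ℕ} (h : r + p + q ≠ N) :
    totD3 δ₁ δ₂ d b r p q = 0 := by
  rcases r with _ | r <;> rcases p with _ | p <;> rcases q with _ | q <;>
    simp (disch := omega) [totD3, tot3A, tot3B, tot3C, hb]

theorem totD3_succ_of_layer_eq_zero {c : ∀ r p q, K r p q} {r : ℕ}
    (hc : ∀ p q, c (r + 1) p q = 0) (p q : ℕ) :
    totD3 δ₁ δ₂ d c (r + 1) p q = δ₁ r p q (c r p q) := by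
  rcases p with _ | p <;> rcases q with _ | q <;> simp [totD3, tot3A, tot3B, tot3C, hc]

end TotalDifferential

section Descent

variable {K : ℕ → ℕ → ℕ → Type*} [∀ r p q, AddCommGroup (K r p q)]
variable (δ₁ : ∀ r p q, K r p q →+ K (r + 1) p q) (δ₂ : ∀ r p q, K r p q →+ K r (p + 1) q)
  (d : ∀ r p q, K r p q →+ K r p (q + 1))

theorem exists_totD3_eq_above_layer
    (hexact : ∀ r p q (x : K (r + 1) p q), δ₁ (r + 1) p q x = 0 →
      ∃ y : K r p q, δ₁ r p q y = x)
    {N m : ℕ} {c : ∀ r p q, K r p q} (hc : ∀ r p q, r + p + q ≠ N → c r p q = 0)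
    (hm : ∀ r p q, m + 1 < r → c r p q = 0) (hDc : ∀ p q, totD3 δ₁ δ₂ d c (m + 2) p q = 0) :
    ∃ Y : ∀ r p q, K r p q, (∀ r p q, r + p + q + 1 ≠ N → Y r p q = 0) ∧
      ∀ r p q, m < r → c r p q = totD3 δ₁ δ₂ d Y r p q := by
  classical
  have hclosed : ∀ p q, δ₁ (m + 1) p q (c (m + 1) p q) = 0 := fun p q => by
    rw [← totD3_succ_of_layer_eq_zero δ₁ δ₂ d (fun p q => hm (m + 2) p q (by omega)), hDc]
  choose y hy hy0 using fun p q =>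
    (δ₁ m p q).exists_apply_eq_and_eq_zero (hexact m p q _ (hclosed p q))
  refine ⟨Pi.single m y, fun r p q h => ?_, fun r p q hr => ?_⟩
  · rcases eq_or_ne r m with rfl | hr
    · rw [Pi.single_eq_same]
      exact hy0 p q (hc _ _ _ (by omega))
    · rw [Pi.single_eq_of_ne hr, Pi.zero_apply, Pi.zero_apply]
  · obtain ⟨r, rfl⟩ : ∃ r', r = r' + 1 := ⟨r - 1, by omega⟩
    rw [totD3_succ_of_layer_eq_zero δ₁ δ₂ d
      (fun p q => by rw [Pi.single_eq_of_ne (by omega), Pi.zero_apply, Pi.zero_apply])]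
    rcases eq_or_ne r m with rfl | hr'
    · rw [Pi.single_eq_same, hy]
    · rw [Pi.single_eq_of_ne hr', Pi.zero_apply, Pi.zero_apply, map_zero, hm _ p q (by omega)]

theorem exists_totD3_eq_of_layers_le
    (hD2 : ∀ c r p q, totD3 δ₁ δ₂ d (totD3 δ₁ δ₂ d c) r p q = 0)
    (hexact : ∀ r p q (x : K (r + 1) p q), δ₁ (r + 1) p q x = 0 →
      ∃ y : K r p q, δ₁ r p q y = x)
    {N : ℕ} (m : ℕ) (c : ∀ r p q, K r p q) (hc : ∀ r p q, r + p + q ≠ N → c r p q = 0)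
    (hm : ∀ r p q, m < r → c r p q = 0) (hDc : ∀ r p q, totD3 δ₁ δ₂ d c (r + 1) p q = 0) :
    ∃ b : ∀ r p q, K r p q, (∀ r p q, r + p + q + 1 ≠ N → b r p q = 0) ∧
      ∀ r p q, c (r + 1) p q = totD3 δ₁ δ₂ d b (r + 1) p q := by
  induction m generalizing c with
  | zero => exact ⟨0, fun _ _ _ _ => rfl, fun r p q => by rw [hm _ _ _ r.succ_pos, totD3_zero]⟩
  | succ m ih =>
    obtain ⟨Y, hY, hcY⟩ :=
      exists_totD3_eq_above_layer δ₁ δ₂ d hexact hc hm (fun p q => hDc (m + 1) p q)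
    obtain ⟨b, hb, hcb⟩ := ih (c - totD3 δ₁ δ₂ d Y)
      (fun r p q h => by
        rw [Pi.sub_apply, Pi.sub_apply, Pi.sub_apply, hc _ _ _ h,
          totD3_eq_zero_of_support δ₁ δ₂ d hY h, sub_zero])
      (fun r p q h => by rw [Pi.sub_apply, Pi.sub_apply, Pi.sub_apply, hcY r p q h, sub_self])
      (fun r p q => by rw [totD3_sub, hDc, hD2, sub_zero])
    refine ⟨Y + b, fun r p q h => ?_, fun r p q => ?_⟩
    · rw [Pi.add_apply, Pi.add_apply, Pi.add_apply, hY r p q h, hb r p q h, add_zero]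
    · rw [totD3_add, ← hcb, Pi.sub_apply, Pi.sub_apply, Pi.sub_apply, add_sub_cancel]

end Descent

section Augmentation

variable {K : ℕ → ℕ → ℕ → Type*} [∀ r p q, AddCommGroup (K r p q)]
variable {V : ℕ → ℕ → Type*} [∀ p q, AddCommGroup (V p q)]
variable (δ₁ : ∀ r p q, K r p q →+ K (r + 1) p q) (δ₂ : ∀ r p q, K r p q →+ K r (p + 1) q)
  (d : ∀ r p q, K r p q →+ K r p (q + 1)) (δ₂V : ∀ p q, V p q →+ V (p + 1) q)
  (dV : ∀ p q, V p q →+ V p (q + 1)) (f : ∀ p q, V p q →+ K 0 p q)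

theorem totD2_zero (p q : ℕ) : totD2 δ₂V dV 0 p q = 0 := by
  rcases p with _ | p <;> rcases q with _ | q <;> simp [totD2, tot2A, tot2B]

theorem exists_eq_augEmb_add_totD3
    (hD2 : ∀ c r p q, totD3 δ₁ δ₂ d (totD3 δ₁ δ₂ d c) r p q = 0)
    (hexact0 : ∀ p q (x : K 0 p q), δ₁ 0 p q x = 0 → ∃ v : V p q, f p q v = x)
    (hexact : ∀ r p q (x : K (r + 1) p q), δ₁ (r + 1) p q x = 0 →
      ∃ y : K r p q, δ₁ r p q y = x)
    {N : ℕ} {c : ∀ r p q, K r p q} (hc : ∀ r p q, r + p + q ≠ N → c r p q = 0)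
    (hDc : ∀ r p q, totD3 δ₁ δ₂ d c (r + 1) p q = 0) :
    ∃ (ω : ∀ p q, V p q) (b : ∀ r p q, K r p q),
      (∀ p q, p + q ≠ N → ω p q = 0) ∧ (∀ r p q, r + p + q + 1 ≠ N → b r p q = 0) ∧
      ∀ r p q, c r p q = augEmb f ω r p q + totD3 δ₁ δ₂ d b r p q := by
  obtain ⟨b, hb, hcb⟩ := exists_totD3_eq_of_layers_le δ₁ δ₂ d hD2 hexact N c hc
    (fun r p q h => hc r p q (by omega)) hDc
  set e := c - totD3 δ₁ δ₂ d b with he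
  have hclosed : ∀ p q, δ₁ 0 p q (e 0 p q) = 0 := fun p q => by
    rw [← totD3_succ_of_layer_eq_zero δ₁ δ₂ d (fun p q => sub_eq_zero.2 (hcb 0 p q)),
      totD3_sub, hDc, hD2, sub_zero]
  choose ω hω hω0 using fun p q =>
    (f p q).exists_apply_eq_and_eq_zero (hexact0 p q _ (hclosed p q))
  refine ⟨ω, b, fun p q h => hω0 p q ?_, hb, fun r p q => ?_⟩
  · rw [he, Pi.sub_apply, Pi.sub_apply, Pi.sub_apply, hc 0 p q (by omega),
      totD3_eq_zero_of_support δ₁ δ₂ d hb (by omega), sub_zero]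
  · rcases r with _ | r
    · exact (sub_add_cancel _ _).symm.trans (congrArg (· + _) (hω p q).symm)
    · exact (hcb r p q).trans (zero_add _).symm

theorem map_totD2_eq_totD3_of_eq_augEmb_add
    (hD2 : ∀ c r p q, totD3 δ₁ δ₂ d (totD3 δ₁ δ₂ d c) r p q = 0)
    (hf2 : ∀ p q (v : V p q), f (p + 1) q (δ₂V p q v) = δ₂ 0 p q (f p q v))
    (hfd : ∀ p q (v : V p q), f p (q + 1) (dV p q v) = d 0 p q (f p q v))
    {c : ∀ r p q, K r p q} {ω : ∀ p q, V p q} {b : ∀ r p q, K r p q}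
    (hcb : ∀ r p q, c r p q = augEmb f ω r p q + totD3 δ₁ δ₂ d b r p q) (p q : ℕ) :
    f p q (totD2 δ₂V dV ω p q) = totD3 δ₁ δ₂ d c 0 p q := by
  obtain rfl : c = augEmb f ω + totD3 δ₁ δ₂ d b := funext fun r => funext fun p => funext (hcb r p)
  rw [totD3_add, hD2, add_zero]
  rcases p with _ | p <;> rcases q with _ | q <;>
    simp [totD2, totD3, tot3A, tot3B, tot3C, tot2A, tot2B, augEmb, hf2, hfd]

end Augmentation

theorem augmentation_quasi_isomorphism_general
    {K : ℕ → ℕ → ℕ → Type*} [∀ r p q, AddCommGroup (K r p q)]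
    {V : ℕ → ℕ → Type*} [∀ p q, AddCommGroup (V p q)]
    (δ₁ : ∀ r p q, K r p q →+ K (r + 1) p q)
    (δ₂ : ∀ r p q, K r p q →+ K r (p + 1) q)
    (d : ∀ r p q, K r p q →+ K r p (q + 1))
    (δ₂V : ∀ p q, V p q →+ V (p + 1) q)
    (dV : ∀ p q, V p q →+ V p (q + 1))
    (f : ∀ p q, V p q →+ K 0 p q)
    (hδ₁ : ∀ r p q (x : K r p q), δ₁ (r + 1) p q (δ₁ r p q x) = 0)
    (hδ₂ : ∀ r p q (x : K r p q), δ₂ r (p + 1) q (δ₂ r p q x) = 0)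
    (hd : ∀ r p q (x : K r p q), d r p (q + 1) (d r p q x) = 0)
    (hc12 : ∀ r p q (x : K r p q), δ₁ r (p + 1) q (δ₂ r p q x) = δ₂ (r + 1) p q (δ₁ r p q x))
    (hc1d : ∀ r p q (x : K r p q), δ₁ r p (q + 1) (d r p q x) = d (r + 1) p q (δ₁ r p q x))
    (hc2d : ∀ r p q (x : K r p q), δ₂ r p (q + 1) (d r p q x) = d r (p + 1) q (δ₂ r p q x))
    (hf_inj : ∀ p q, Function.Injective (f p q))
    (hf2 : ∀ p q (v : V p q), f (p + 1) q (δ₂V p q v) = δ₂ 0 p q (f p q v))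
    (hfd : ∀ p q (v : V p q), f p (q + 1) (dV p q v) = d 0 p q (f p q v))
    (hexact0 : ∀ p q (x : K 0 p q), δ₁ 0 p q x = 0 → ∃ v : V p q, f p q v = x)
    (hexact : ∀ r p q (x : K (r + 1) p q), δ₁ (r + 1) p q x = 0 →
      ∃ y : K r p q, δ₁ r p q y = x) :
    -- surjectivity on total cohomology:
    (∀ (n : ℕ) (c : ∀ r p q, K r p q),
      (∀ r p q, r + p + q ≠ n → c r p q = 0) →
      (∀ r p q, totD3 δ₁ δ₂ d c r p q = 0) →
      ∃ (ω : ∀ p q, V p q) (b : ∀ r p q, K r p q),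
        (∀ p q, p + q ≠ n → ω p q = 0) ∧
        (∀ p q, totD2 δ₂V dV ω p q = 0) ∧
        (∀ r p q, r + p + q + 1 ≠ n → b r p q = 0) ∧
        (∀ r p q, c r p q = augEmb f ω r p q + totD3 δ₁ δ₂ d b r p q)) ∧
    -- injectivity on total cohomology:
    (∀ (n : ℕ) (ω : ∀ p q, V p q),
      (∀ p q, p + q ≠ n → ω p q = 0) →
      (∀ p q, totD2 δ₂V dV ω p q = 0) →
      (∃ φ : ∀ r p q, K r p q,
        (∀ r p q, r + p + q + 1 ≠ n → φ r p q = 0) ∧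
        (∀ r p q, augEmb f ω r p q = totD3 δ₁ δ₂ d φ r p q)) →
      ∃ ω' : ∀ p q, V p q,
        (∀ p q, p + q + 1 ≠ n → ω' p q = 0) ∧
        (∀ p q, ω p q = totD2 δ₂V dV ω' p q)) := by
  have hD2 := totD3_totD3 δ₁ δ₂ d hδ₁ hδ₂ hd hc12 hc1d hc2d
  refine ⟨fun n c hc hDc => ?_, fun n ω _ _ ⟨φ, hφ, hωφ⟩ => ?_⟩
  · obtain ⟨ω, b, hω, hb, hcb⟩ := exists_eq_augEmb_add_totD3 δ₁ δ₂ d f hD2 hexact0 hexact hc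
      (fun r p q => hDc (r + 1) p q)
    refine ⟨ω, b, hω, fun p q => hf_inj p q ?_, hb, hcb⟩
    rw [map_totD2_eq_totD3_of_eq_augEmb_add δ₁ δ₂ d δ₂V dV f hD2 hf2 hfd hcb, hDc, map_zero]
  · rcases n with _ | N
    · have hφ0 : φ = 0 := funext fun r => funext fun p => funext fun q => hφ r p q (by omega)
      refine ⟨0, fun _ _ _ => rfl, fun p q => ?_⟩
      rw [totD2_zero]
      exact hf_inj p q ((hωφ 0 p q).trans (by rw [hφ0, totD3_zero, map_zero]))
    · obtain ⟨ω', ψ, hω', -, hφψ⟩ := exists_eq_augEmb_add_totD3 δ₁ δ₂ d f hD2 hexact0 hexact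
        (N := N) (fun r p q h => hφ r p q (by omega)) (fun r p q => (hωφ (r + 1) p q).symm)
      refine ⟨ω', fun p q h => hω' p q (by omega), fun p q => hf_inj p q ?_⟩
      exact (hωφ 0 p q).trans
        (map_totD2_eq_totD3_of_eq_augEmb_add δ₁ δ₂ d δ₂V dV f hD2 hf2 hfd hφψ p q).symm

/-- under the hypotheses of the augmented triple complex lemma
(exact rows in the `δ₁`-direction), the augmentation `f* : Tot(V) → Tot(K)` is a
quasi-isomorphism of total complexes: it is both surjective and injective on
total cohomology. -/
theorem augmentation_quasi_isomorphism
    {K : ℕ → ℕ → ℕ → Type*} [∀ r p q, AddCommGroup (K r p q)]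
    {V : ℕ → ℕ → Type*} [∀ p q, AddCommGroup (V p q)]
    (δ₁ : ∀ r p q, K r p q →+ K (r + 1) p q)
    (δ₂ : ∀ r p q, K r p q →+ K r (p + 1) q)
    (d : ∀ r p q, K r p q →+ K r p (q + 1))
    (δ₂V : ∀ p q, V p q →+ V (p + 1) q)
    (dV : ∀ p q, V p q →+ V p (q + 1))
    (f : ∀ p q, V p q →+ K 0 p q)
    (hδ₁ : ∀ r p q (x : K r p q), δ₁ (r + 1) p q (δ₁ r p q x) = 0)
    (hδ₂ : ∀ r p q (x : K r p q), δ₂ r (p + 1) q (δ₂ r p q x) = 0)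
    (hd : ∀ r p q (x : K r p q), d r p (q + 1) (d r p q x) = 0)
    (hc12 : ∀ r p q (x : K r p q), δ₁ r (p + 1) q (δ₂ r p q x) = δ₂ (r + 1) p q (δ₁ r p q x))
    (hc1d : ∀ r p q (x : K r p q), δ₁ r p (q + 1) (d r p q x) = d (r + 1) p q (δ₁ r p q x))
    (hc2d : ∀ r p q (x : K r p q), δ₂ r p (q + 1) (d r p q x) = d r (p + 1) q (δ₂ r p q x))
    (hδ₂V : ∀ p q (v : V p q), δ₂V (p + 1) q (δ₂V p q v) = 0)
    (hdV : ∀ p q (v : V p q), dV p (q + 1) (dV p q v) = 0)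
    (hcV : ∀ p q (v : V p q), δ₂V p (q + 1) (dV p q v) = dV (p + 1) q (δ₂V p q v))
    (hf_inj : ∀ p q, Function.Injective (f p q))
    (hf2 : ∀ p q (v : V p q), f (p + 1) q (δ₂V p q v) = δ₂ 0 p q (f p q v))
    (hfd : ∀ p q (v : V p q), f p (q + 1) (dV p q v) = d 0 p q (f p q v))
    (hexact0 : ∀ p q (x : K 0 p q), δ₁ 0 p q x = 0 → ∃ v : V p q, f p q v = x)
    (hexact : ∀ r p q (x : K (r + 1) p q), δ₁ (r + 1) p q x = 0 →
      ∃ y : K r p q, δ₁ r p q y = x) :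
    -- surjectivity on total cohomology:
    (∀ (n : ℕ) (c : ∀ r p q, K r p q),
      (∀ r p q, r + p + q ≠ n → c r p q = 0) →
      (∀ r p q, totD3 δ₁ δ₂ d c r p q = 0) →
      ∃ (ω : ∀ p q, V p q) (b : ∀ r p q, K r p q),
        (∀ p q, p + q ≠ n → ω p q = 0) ∧
        (∀ p q, totD2 δ₂V dV ω p q = 0) ∧
        (∀ r p q, r + p + q + 1 ≠ n → b r p q = 0) ∧
        (∀ r p q, c r p q = augEmb f ω r p q + totD3 δ₁ δ₂ d b r p q)) ∧
    -- injectivity on total cohomology: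
    (∀ (n : ℕ) (ω : ∀ p q, V p q),
      (∀ p q, p + q ≠ n → ω p q = 0) →
      (∀ p q, totD2 δ₂V dV ω p q = 0) →
      (∃ φ : ∀ r p q, K r p q,
        (∀ r p q, r + p + q + 1 ≠ n → φ r p q = 0) ∧
        (∀ r p q, augEmb f ω r p q = totD3 δ₁ δ₂ d φ r p q)) →
      ∃ ω' : ∀ p q, V p q,
        (∀ p q, p + q + 1 ≠ n → ω' p q = 0) ∧
        (∀ p q, ω p q = totD2 δ₂V dV ω' p q)) :=
  augmentation_quasi_isomorphism_general δ₁ δ₂ d δ₂V dV f hδ₁ hδ₂ hd hc12 hc1d hc2d hf_inj hf2 hfd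
    hexact0 hexact
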